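/- arXiv:1209.5825 — 9 statements merged into one kernel-verified Lean document; each statement's English description precedes it below -/
import Mathlib

section
/- For all a, b > 0 with a ≠ b, the Neuman–Sándor mean satisfies M(a,b) > C(a,b)^(1/6) · A(a,b)^(5/6). -/
/-!
Put `A = (a + b)/2` and `t = (a - b)/(a + b)`. Then `C = A (1 + t²)` and `M = A t / arsinh t`, so the
inequality becomes `(1 + t²)^(1/6) < t / arsinh t`, an even statement in `t`. For `t > 0` it says
`arsinh t < t (1 + t²)^(-1/6)`; both sides vanish at `0`, and the derivative of the difference is
`(1 + t²)^(-7/6) (1 + 2t²/3 - (1 + t²)^(2/3))`, which is positive by Bernoulli's inequality.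
-/

open Real

noncomputable def NSmean (a b : ℝ) : ℝ := (a - b) / (2 * Real.arsinh ((a - b) / (a + b)))
noncomputable def Amean (a b : ℝ) : ℝ := (a + b) / 2
noncomputable def Cmean (a b : ℝ) : ℝ := (a ^ 2 + b ^ 2) / (a + b)

lemma hasDerivAt_mul_rpow_sub_arsinh (x : ℝ) :
    HasDerivAt (fun x : ℝ => x * (1 + x ^ 2) ^ (-(1 / 6) : ℝ) - arsinh x)
      ((1 + x ^ 2) ^ (-(7 / 6) : ℝ) * (1 + 2 / 3 * x ^ 2 - (1 + x ^ 2) ^ (2 / 3 : ℝ))) x := by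
  have hu : 0 < 1 + x ^ 2 := by positivity
  have hsq : HasDerivAt (fun x : ℝ => 1 + x ^ 2) (2 * x) x := by
    simpa using (hasDerivAt_pow 2 x).const_add 1
  refine (((hasDerivAt_id' x).fun_mul (hsq.rpow_const (p := -(1 / 6)) (Or.inl hu.ne'))).fun_sub
    (hasDerivAt_arsinh x)).congr_deriv ?_
  have h16 : (1 + x ^ 2) ^ (-(1 / 6) : ℝ) = (1 + x ^ 2) * (1 + x ^ 2) ^ (-(7 / 6) : ℝ) := by
    rw [← rpow_one_add' hu.le (by norm_num)]; norm_num
  have h76 : (1 + x ^ 2) ^ (-(1 / 6) - 1 : ℝ) = (1 + x ^ 2) ^ (-(7 / 6) : ℝ) := by norm_num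
  have hsqrt : (√(1 + x ^ 2))⁻¹ = (1 + x ^ 2) ^ (2 / 3 : ℝ) * (1 + x ^ 2) ^ (-(7 / 6) : ℝ) := by
    rw [sqrt_eq_rpow, ← rpow_neg hu.le, ← rpow_add hu]; norm_num
  rw [h76, hsqrt, h16]
  ring

lemma arsinh_lt_mul_rpow {t : ℝ} (ht : 0 < t) : arsinh t < t * (1 + t ^ 2) ^ (-(1 / 6) : ℝ) := by
  let g : ℝ → ℝ := fun x => x * (1 + x ^ 2) ^ (-(1 / 6) : ℝ) - arsinh x
  have hg : StrictMonoOn g (Set.Ici 0) := by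
    refine strictMonoOn_of_deriv_pos (convex_Ici 0)
      (fun x _ => (hasDerivAt_mul_rpow_sub_arsinh x).continuousAt.continuousWithinAt) ?_
    intro x hx
    rw [interior_Ici] at hx
    have hu : 0 < 1 + x ^ 2 := by positivity
    have hbernoulli : (1 + x ^ 2) ^ (2 / 3 : ℝ) < 1 + 2 / 3 * x ^ 2 :=
      rpow_one_add_lt_one_add_mul_self (by nlinarith) (pow_pos hx 2).ne' (by norm_num) (by norm_num)
    rw [(hasDerivAt_mul_rpow_sub_arsinh x).deriv]
    exact mul_pos (rpow_pos_of_pos hu _) (sub_pos.2 hbernoulli)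
  simpa [g] using hg Set.self_mem_Ici ht.le ht

lemma rpow_one_add_sq_lt_div_arsinh_of_pos {t : ℝ} (ht : 0 < t) :
    (1 + t ^ 2) ^ (1 / 6 : ℝ) < t / arsinh t := by
  have hu : 0 < 1 + t ^ 2 := by positivity
  rw [lt_div_iff₀ (arsinh_pos_iff.2 ht)]
  calc (1 + t ^ 2) ^ (1 / 6 : ℝ) * arsinh t
      < (1 + t ^ 2) ^ (1 / 6 : ℝ) * (t * (1 + t ^ 2) ^ (-(1 / 6) : ℝ)) :=
        mul_lt_mul_of_pos_left (arsinh_lt_mul_rpow ht) (rpow_pos_of_pos hu _)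
    _ = t := by rw [rpow_neg hu.le]; field_simp

lemma rpow_one_add_sq_lt_div_arsinh {t : ℝ} (ht : t ≠ 0) :
    (1 + t ^ 2) ^ (1 / 6 : ℝ) < t / arsinh t := by
  rcases ht.lt_or_gt with ht | ht
  · simpa [arsinh_neg, neg_div_neg_eq] using rpow_one_add_sq_lt_div_arsinh_of_pos (neg_pos.2 ht)
  · exact rpow_one_add_sq_lt_div_arsinh_of_pos ht

lemma Cmean_eq_Amean_mul {a b : ℝ} (hab : a + b ≠ 0) :
    Cmean a b = Amean a b * (1 + ((a - b) / (a + b)) ^ 2) := by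
  unfold Cmean Amean
  field_simp
  ring

lemma NSmean_eq_Amean_mul {a b : ℝ} (hab : a + b ≠ 0) :
    NSmean a b = Amean a b * ((a - b) / (a + b) / arsinh ((a - b) / (a + b))) := by
  unfold NSmean Amean
  field_simp

theorem stmt_0 (a b : ℝ) (ha : 0 < a) (hb : 0 < b) (hab : a ≠ b) :
    Cmean a b ^ ((1 : ℝ) / 6) * Amean a b ^ ((5 : ℝ) / 6) < NSmean a b := by
  have hs : a + b ≠ 0 := by positivity
  have hA : 0 < Amean a b := by unfold Amean; positivity
  have ht : (a - b) / (a + b) ≠ 0 := div_ne_zero (sub_ne_zero.2 hab) hs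
  rw [Cmean_eq_Amean_mul hs, NSmean_eq_Amean_mul hs, mul_rpow hA.le (by positivity),
    mul_right_comm, ← rpow_add hA, show (1 : ℝ) / 6 + 5 / 6 = 1 by norm_num, rpow_one]
  exact mul_lt_mul_of_pos_left (rpow_one_add_sq_lt_div_arsinh ht) hA
end

section
/- The constant 1/6 is best possible in the lower bound: if α > 1/6, then there exist a, b > 0 with a ≠ b such that M(a,b) < C(a,b)^α · A(a,b)^(1-α). -/
/-!
Take a = 1 + t and b = 1 - t. Then A = 1, C = 1 + t² and M = t / arsinh t. The Taylor bound
arsinh t ≥ t - t³/6 gives M ≤ 6 / (6 - t²) = 1 + t²/6 + O(t⁴), whereas C^α ≥ 1 + α t² / (1 + t²)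
by `exp y ≥ 1 + y` and `log y ≥ 1 - 1/y`. Hence M < C^α A^(1-α) as soon as t² is small
compared with 6α - 1.
-/

open Real

lemma NSmean_one_add_one_sub (t : ℝ) : NSmean (1 + t) (1 - t) = t / arsinh t := by
  rw [NSmean, show (1 + t) - (1 - t) = 2 * t by ring, show (1 + t) + (1 - t) = 2 by ring,
    mul_div_cancel_left₀ t two_ne_zero, mul_div_mul_left t _ two_ne_zero]

lemma Amean_one_add_one_sub (t : ℝ) : Amean (1 + t) (1 - t) = 1 := by
  rw [Amean]; ring

lemma Cmean_one_add_one_sub (t : ℝ) : Cmean (1 + t) (1 - t) = 1 + t ^ 2 := by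
  rw [Cmean]; ring

lemma one_sub_sq_div_two_le_inv_sqrt (x : ℝ) : 1 - x ^ 2 / 2 ≤ (√(1 + x ^ 2))⁻¹ := by
  have hsqrt : √(1 + x ^ 2) ≤ 1 + x ^ 2 / 2 := sqrt_le_iff.2 ⟨by positivity, by nlinarith⟩
  calc 1 - x ^ 2 / 2 ≤ (1 + x ^ 2 / 2)⁻¹ := by
        rw [← one_div, le_div_iff₀ (by positivity)]; nlinarith [sq_nonneg (x ^ 2)]
    _ ≤ (√(1 + x ^ 2))⁻¹ := inv_anti₀ (by positivity) hsqrt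

lemma monotone_arsinh_sub_cubic : Monotone fun s : ℝ => arsinh s - (s - s ^ 3 / 6) := by
  have hderiv (x : ℝ) : HasDerivAt (fun s : ℝ => arsinh s - (s - s ^ 3 / 6))
      ((√(1 + x ^ 2))⁻¹ - (1 - (3 : ℕ) * x ^ 2 / 6)) x :=
    (hasDerivAt_arsinh x).sub ((hasDerivAt_id x).sub ((hasDerivAt_pow 3 x).div_const 6))
  refine monotone_of_deriv_nonneg (fun x => (hderiv x).differentiableAt) fun x => ?_
  rw [(hderiv x).deriv]
  linarith [one_sub_sq_div_two_le_inv_sqrt x]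

lemma sub_pow_three_div_six_le_arsinh {t : ℝ} (ht : 0 ≤ t) : t - t ^ 3 / 6 ≤ arsinh t := by
  simpa using monotone_arsinh_sub_cubic ht

lemma div_arsinh_le {t : ℝ} (ht : 0 < t) (ht6 : t ^ 2 < 6) : t / arsinh t ≤ 6 / (6 - t ^ 2) := by
  have hcubic : 0 < t - t ^ 3 / 6 := by nlinarith
  calc t / arsinh t ≤ t / (t - t ^ 3 / 6) :=
        div_le_div_of_nonneg_left ht.le hcubic (sub_pow_three_div_six_le_arsinh ht.le)
    _ = 6 / (6 - t ^ 2) := by field_simp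

lemma one_add_mul_one_sub_inv_le_rpow {y : ℝ} (hy : 0 < y) {p : ℝ} (hp : 0 ≤ p) :
    1 + p * (1 - y⁻¹) ≤ y ^ p := by
  rw [rpow_def_of_pos hy]
  calc 1 + p * (1 - y⁻¹) ≤ log y * p + 1 := by nlinarith [one_sub_inv_le_log_of_pos hy]
    _ ≤ exp (log y * p) := add_one_le_exp _

theorem stmt_2 (α : ℝ) (hα : 1 / 6 < α) :
    ∃ a b : ℝ, 0 < a ∧ 0 < b ∧ a ≠ b ∧
      NSmean a b < Cmean a b ^ α * Amean a b ^ (1 - α) := by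
  set x := (6 * α - 1) / (6 * (1 + α))
  have hx0 : 0 < x := div_pos (by linarith) (by linarith)
  have hx1 : x < 1 := (div_lt_one (by linarith)).2 (by linarith)
  have hxα : (1 + α) * x < 6 * α - 1 := by
    rw [mul_div_assoc', div_lt_iff₀ (by linarith)]; nlinarith
  set t := √x
  have ht0 : 0 < t := sqrt_pos.2 hx0
  have htx : t ^ 2 = x := sq_sqrt hx0.le
  have ht1 : t < 1 := by nlinarith
  refine ⟨1 + t, 1 - t, by linarith, by linarith, by linarith, ?_⟩
  rw [NSmean_one_add_one_sub, Cmean_one_add_one_sub, Amean_one_add_one_sub, one_rpow, mul_one, htx]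
  calc t / arsinh t ≤ 6 / (6 - x) := htx ▸ div_arsinh_le ht0 (by linarith)
    _ < 1 + α * (1 - (1 + x)⁻¹) := by
        rw [div_lt_iff₀ (by linarith)]
        field_simp
        nlinarith
    _ ≤ (1 + x) ^ α := one_add_mul_one_sub_inv_le_rpow (by linarith) (by linarith)
end

section
/- The constant β₀ = -log(log(1+√2))/log 2 is best possible in the upper bound: if β < β₀, then there exist a, b > 0 with a ≠ b such that M(a,b) > C(a,b)^β · A(a,b)^(1-β). -/
/-!
The formulas for the three means still make sense at the degenerate pair `(1, 0)`, where
`C = 1`, `A = 1/2` and `M = 1 / (2 arsinh 1) = 1 / (2 log (1 + √2))`. There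
`C^β A^(1-β) = 2^(β-1)`, which is smaller than `M` exactly when `β < β₀`. All three means are
continuous in `b` at `(1, 0)`, so the strict inequality persists for `(1, b)` with `b > 0` small.
-/

open Real Filter Topology

lemma arsinh_one : arsinh 1 = log (1 + √2) := by
  norm_num [arsinh]

lemma lt_rpow_neg_of_lt_neg_log_div_log {L β b : ℝ} (hL : 0 < L) (hb : 1 < b)
    (hβ : β < -log L / log b) : L < b ^ (-β) := by
  rw [← exp_log hL, rpow_def_of_pos (zero_lt_one.trans hb), exp_lt_exp]
  have := (lt_div_iff₀ (log_pos hb)).1 hβ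
  linarith

lemma continuousAt_Amean (a b : ℝ) : ContinuousAt (Amean a) b := by
  unfold Amean
  fun_prop

lemma continuousAt_Cmean {a b : ℝ} (hab : a + b ≠ 0) : ContinuousAt (Cmean a) b := by
  unfold Cmean
  exact ContinuousAt.div (by fun_prop) (by fun_prop) hab

lemma continuousAt_NSmean {a b : ℝ} (hab : a + b ≠ 0) (hne : a ≠ b) :
    ContinuousAt (NSmean a) b := by
  have harsinh : arsinh ((a - b) / (a + b)) ≠ 0 := by
    rw [Ne, arsinh_eq_zero_iff, div_eq_zero_iff, sub_eq_zero]
    tauto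
  unfold NSmean
  refine ContinuousAt.div (by fun_prop) ?_ (mul_ne_zero two_ne_zero harsinh)
  exact continuousAt_const.mul
    (continuous_arsinh.continuousAt.comp (ContinuousAt.div (by fun_prop) (by fun_prop) hab))

lemma NSmean_one_zero : NSmean 1 0 = (2 * arsinh 1)⁻¹ := by
  norm_num [NSmean]

lemma Cmean_rpow_mul_Amean_rpow_lt_NSmean_one_zero {β : ℝ}
    (hβ : β < -log (log (1 + √2)) / log 2) :
    Cmean 1 0 ^ β * Amean 1 0 ^ (1 - β) < NSmean 1 0 := by
  have hL : 0 < arsinh 1 := arsinh_pos_iff.2 one_pos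
  have hlt : arsinh 1 < 2 ^ (-β) :=
    lt_rpow_neg_of_lt_neg_log_div_log hL one_lt_two (arsinh_one ▸ hβ)
  have hC : Cmean 1 0 = 1 := by norm_num [Cmean]
  have hA : Amean 1 0 ^ (1 - β) = (2 * 2 ^ (-β))⁻¹ := by
    rw [Amean, add_zero, one_div, inv_rpow zero_le_two, sub_eq_add_neg, rpow_add two_pos,
      rpow_one]
  rw [hC, one_rpow, one_mul, hA, NSmean_one_zero]
  gcongr

theorem stmt_3 (β : ℝ) (hβ : β < -Real.log (Real.log (1 + Real.sqrt 2)) / Real.log 2) :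
    ∃ a b : ℝ, 0 < a ∧ 0 < b ∧ a ≠ b ∧
      Cmean a b ^ β * Amean a b ^ (1 - β) < NSmean a b := by
  have hcont : ContinuousAt (fun b => Cmean 1 b ^ β * Amean 1 b ^ (1 - β)) 0 :=
    ((continuousAt_Cmean (by norm_num)).rpow_const (by norm_num [Cmean])).mul
      ((continuousAt_Amean 1 0).rpow_const (by norm_num [Amean]))
  have hnear : ∀ᶠ b in 𝓝 0, Cmean 1 b ^ β * Amean 1 b ^ (1 - β) < NSmean 1 b :=
    hcont.eventually_lt (continuousAt_NSmean (by norm_num) one_ne_zero)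
      (Cmean_rpow_mul_Amean_rpow_lt_NSmean_one_zero hβ)
  obtain ⟨b, ⟨hlt, hb1⟩, hb⟩ :=
    (((hnear.and (eventually_ne_nhds zero_ne_one)).filter_mono nhdsWithin_le_nhds).and
      (self_mem_nhdsWithin : ∀ᶠ b in 𝓝[>] (0 : ℝ), 0 < b)).exists
  exact ⟨1, b, one_pos, hb, hb1.symm, hlt⟩
end

section
/- For all a, b > 0 with a ≠ b, M(a,b) < (C(a,b)/6 + 5A(a,b)/6)^(8/25) · (C(a,b)^(1/6) A(a,b)^(5/6))^(17/25). -/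
/-!
With `t = (a - b) / (a + b)` we have `M = A · t / arsinh t` and `C = A (1 + t²)`, so the claim
is `t / arsinh t < (1 + t²/6)^(8/25) (1 + t²)^(17/150)` for `0 < |t| < 1`. Both sides agree up
to order `t⁴`, so only sharp bounds work. Comparing derivatives, `arsinh t` dominates the
rational function `t P(t²) / Q(t²)` (`P = arsinhNum`, `Q = arsinhDen`), which bounds the left
side by `Q(u) / P(u)`, `u = t²`. Taking logarithms and using the Padé bounds
`3 (x² - 1) / (x² + 4x + 1) ≤ log x ≤ (x - 1)(x + 5) / (4x + 2)` for `x ≥ 1` leaves a rational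
inequality in `u ∈ (0, 1)` whose numerator is `u³` times a polynomial with dominant constant term.
-/

open Real Set

theorem le_of_hasDerivAt_of_deriv_le {f g f' g' : ℝ → ℝ} {a b : ℝ}
    (hf : ∀ x ∈ Icc a b, HasDerivAt f (f' x) x) (hg : ∀ x ∈ Icc a b, HasDerivAt g (g' x) x)
    (ha : f a ≤ g a) (hle : ∀ x ∈ Ico a b, f' x ≤ g' x) : ∀ x ∈ Icc a b, f x ≤ g x :=
  image_le_of_deriv_right_le_deriv_boundary
    (fun x hx => (hf x hx).continuousAt.continuousWithinAt)
    (fun x hx => (hf x (Ico_subset_Icc_self hx)).hasDerivWithinAt) ha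
    (fun x hx => (hg x hx).continuousAt.continuousWithinAt)
    (fun x hx => (hg x (Ico_subset_Icc_self hx)).hasDerivWithinAt) hle

noncomputable def logPade22 (x : ℝ) : ℝ := 3 * (x ^ 2 - 1) / (x ^ 2 + 4 * x + 1)

noncomputable def logPade21 (x : ℝ) : ℝ := (x - 1) * (x + 5) / (4 * x + 2)

theorem hasDerivAt_logPade22 {x : ℝ} (hx : 0 ≤ x) :
    HasDerivAt logPade22 (12 * (x ^ 2 + x + 1) / (x ^ 2 + 4 * x + 1) ^ 2) x := by
  have hD : x ^ 2 + 4 * x + 1 ≠ 0 := by positivity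
  have h := (((hasDerivAt_pow 2 x).sub_const 1).const_mul 3).div
    (((hasDerivAt_pow 2 x).add ((hasDerivAt_id' x).const_mul 4)).add_const 1) hD
  exact h.congr_deriv (by simp only [Pi.add_apply]; field_simp; ring)

theorem hasDerivAt_logPade21 {x : ℝ} (hx : 0 ≤ x) :
    HasDerivAt logPade21 ((x ^ 2 + x + 7) / (2 * x + 1) ^ 2) x := by
  have hD : 4 * x + 2 ≠ 0 := by positivity
  have h := (((hasDerivAt_id' x).sub_const 1).mul ((hasDerivAt_id' x).add_const 5)).div
    (((hasDerivAt_id' x).const_mul 4).add_const 2) hD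
  exact h.congr_deriv (by simp only [Pi.mul_apply]; field_simp; ring)

theorem logPade22_le_log {x : ℝ} (hx : 1 ≤ x) : logPade22 x ≤ log x := by
  refine le_of_hasDerivAt_of_deriv_le (fun y hy => hasDerivAt_logPade22 (by linarith [hy.1]))
    (fun y hy => hasDerivAt_log (by linarith [hy.1])) (by simp [logPade22]) ?_
    x ⟨hx, le_rfl⟩
  intro y ⟨hy, _⟩
  have hgap : y⁻¹ - 12 * (y ^ 2 + y + 1) / (y ^ 2 + 4 * y + 1) ^ 2 =
      (y - 1) ^ 4 / (y * (y ^ 2 + 4 * y + 1) ^ 2) := by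
    have : y ≠ 0 := by positivity
    field_simp; ring
  have : 0 ≤ (y - 1) ^ 4 / (y * (y ^ 2 + 4 * y + 1) ^ 2) := by positivity
  linarith

theorem log_le_logPade21 {x : ℝ} (hx : 1 ≤ x) : log x ≤ logPade21 x := by
  refine le_of_hasDerivAt_of_deriv_le (fun y hy => hasDerivAt_log (by linarith [hy.1]))
    (fun y hy => hasDerivAt_logPade21 (by linarith [hy.1])) (by simp [logPade21]) ?_
    x ⟨hx, le_rfl⟩
  intro y ⟨hy, _⟩
  have hgap : (y ^ 2 + y + 7) / (2 * y + 1) ^ 2 - y⁻¹ = (y - 1) ^ 3 / (y * (2 * y + 1) ^ 2) := by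
    have : y ≠ 0 := by positivity
    field_simp; ring
  have : 0 ≤ (y - 1) ^ 3 / (y * (2 * y + 1) ^ 2) :=
    div_nonneg (pow_nonneg (sub_nonneg.2 hy) 3) (by positivity)
  linarith

def arsinhNum (u : ℝ) : ℝ := 214552800 + 205768080 * u + 32689230 * u ^ 2 - 939109 * u ^ 3

def arsinhDen (u : ℝ) : ℝ := 214552800 + 241526880 * u + 56852250 * u ^ 2

noncomputable def arsinhApprox (t : ℝ) : ℝ := t * arsinhNum (t ^ 2) / arsinhDen (t ^ 2)

def arsinhApproxDerivNum (u : ℝ) : ℝ :=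
  (arsinhNum u + 2 * u * (205768080 + 65378460 * u - 2817327 * u ^ 2)) * arsinhDen u -
    2 * u * arsinhNum u * (241526880 + 113704500 * u)

theorem arsinhNum_pos {u : ℝ} (hu0 : 0 ≤ u) (hu1 : u ≤ 1) : 0 < arsinhNum u := by
  have : u ^ 3 ≤ 1 := pow_le_one₀ hu0 hu1
  unfold arsinhNum
  nlinarith [pow_nonneg hu0 2]

theorem arsinhDen_pos {u : ℝ} (hu : 0 ≤ u) : 0 < arsinhDen u := by
  unfold arsinhDen; positivity

theorem hasDerivAt_arsinhNum (u : ℝ) :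
    HasDerivAt arsinhNum (205768080 + 65378460 * u - 2817327 * u ^ 2) u := by
  unfold arsinhNum
  have h := ((((hasDerivAt_id' u).const_mul 205768080).const_add 214552800).add
    ((hasDerivAt_pow 2 u).const_mul 32689230)).sub ((hasDerivAt_pow 3 u).const_mul 939109)
  refine h.congr_deriv ?_
  norm_num; ring

theorem hasDerivAt_arsinhDen (u : ℝ) : HasDerivAt arsinhDen (241526880 + 113704500 * u) u := by
  unfold arsinhDen
  have h := (((hasDerivAt_id' u).const_mul 241526880).const_add 214552800).add
    ((hasDerivAt_pow 2 u).const_mul 56852250)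
  refine h.congr_deriv ?_
  norm_num; ring

theorem hasDerivAt_arsinhApprox (t : ℝ) :
    HasDerivAt arsinhApprox (arsinhApproxDerivNum (t ^ 2) / arsinhDen (t ^ 2) ^ 2) t := by
  have hsq : HasDerivAt (fun x : ℝ => x ^ 2) (2 * t) t := by simpa using hasDerivAt_pow 2 t
  have hP := (hasDerivAt_arsinhNum _).comp (h := fun x => x ^ 2) t hsq
  have hQ := (hasDerivAt_arsinhDen _).comp (h := fun x => x ^ 2) t hsq
  have h := ((hasDerivAt_id' t).mul hP).div hQ (arsinhDen_pos (sq_nonneg t)).ne'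
  refine h.congr_deriv ?_
  simp only [Function.comp_apply, Pi.mul_apply, arsinhApproxDerivNum]
  ring

theorem sq_arsinhApproxDerivNum_le {u : ℝ} (hu0 : 0 ≤ u) (hu1 : u ≤ 1) :
    (1 + u) * arsinhApproxDerivNum u ^ 2 ≤ arsinhDen u ^ 4 := by
  have hgap : arsinhDen u ^ 4 - (1 + u) * arsinhApproxDerivNum u ^ 2 =
      u ^ 6 * (12040388574017053580835120000000 + 21798995615758125749931408000000 * u +
        13419162612143558568936666000000 * u ^ 2 + 3095675457717046852186136640000 * u ^ 3 +
        206387309676614192952021787500 * u ^ 4 - 25654870630179618802628062500 * u ^ 5) := by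
    simp only [arsinhApproxDerivNum, arsinhNum, arsinhDen]; ring
  have hu5 : u ^ 5 ≤ 1 := pow_le_one₀ hu0 hu1
  have : 0 ≤ arsinhDen u ^ 4 - (1 + u) * arsinhApproxDerivNum u ^ 2 := by
    rw [hgap]
    refine mul_nonneg (by positivity) ?_
    nlinarith [pow_nonneg hu0 2, pow_nonneg hu0 3, pow_nonneg hu0 4]
  linarith

theorem arsinhApproxDerivNum_div_le {u : ℝ} (hu0 : 0 ≤ u) (hu1 : u ≤ 1) :
    arsinhApproxDerivNum u / arsinhDen u ^ 2 ≤ (√(1 + u))⁻¹ := by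
  have hs : 0 < √(1 + u) := by positivity
  rw [div_le_iff₀ (pow_pos (arsinhDen_pos hu0) 2), inv_mul_eq_div, le_div_iff₀ hs]
  refine le_of_sq_le_sq ?_ (by positivity)
  rw [mul_pow, sq_sqrt (by positivity), ← pow_mul, mul_comm]
  exact sq_arsinhApproxDerivNum_le hu0 hu1

theorem arsinhApprox_le_arsinh {t : ℝ} (ht0 : 0 ≤ t) (ht1 : t ≤ 1) :
    arsinhApprox t ≤ arsinh t := by
  refine le_of_hasDerivAt_of_deriv_le (fun y _ => hasDerivAt_arsinhApprox y)
    (fun y _ => hasDerivAt_arsinh y) (by simp [arsinhApprox]) ?_ t ⟨ht0, le_rfl⟩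
  intro y ⟨hy0, hy1⟩
  have hy : y ^ 2 ≤ 1 := pow_le_one₀ hy0 (by linarith)
  exact arsinhApproxDerivNum_div_le (sq_nonneg y) hy

theorem div_arsinh_le_s5 {t : ℝ} (ht0 : 0 < t) (ht1 : t ≤ 1) :
    t / arsinh t ≤ arsinhDen (t ^ 2) / arsinhNum (t ^ 2) := by
  have hu1 : t ^ 2 ≤ 1 := pow_le_one₀ ht0.le ht1
  have hP := arsinhNum_pos (sq_nonneg t) hu1
  have hQ := arsinhDen_pos (sq_nonneg t)
  have h := arsinhApprox_le_arsinh ht0.le ht1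
  rw [arsinhApprox, div_le_iff₀ hQ] at h
  rw [div_le_div_iff₀ (arsinh_pos_iff.2 ht0) hP]
  linarith

theorem logPade21_arsinhDen_div_arsinhNum_lt {u : ℝ} (hu0 : 0 < u) (hu1 : u < 1) :
    logPade21 (arsinhDen u / arsinhNum u) <
      8 / 25 * logPade22 (1 + u / 6) + 17 / 150 * logPade22 (1 + u) := by
  have hP := arsinhNum_pos hu0.le hu1.le
  have hQ := arsinhDen_pos hu0.le
  have hgap : 8 / 25 * logPade22 (1 + u / 6) + 17 / 150 * logPade22 (1 + u) -
      logPade21 (arsinhDen u / arsinhNum u) =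
      20 * u ^ 3 * (4103504584058880000 + 7389715650143904000 * u +
        4178053544367830400 * u ^ 2 + 657760124031977880 * u ^ 3 - 63326304812956860 * u ^ 4 -
        19839585508141251 * u ^ 5 - 730542100002854 * u ^ 6 + 16756588563739 * u ^ 7) /
      (50 * (u ^ 2 + 36 * u + 216) * (u ^ 2 + 6 * u + 6) * arsinhNum u *
        (4 * arsinhDen u + 2 * arsinhNum u)) := by
    unfold logPade22 logPade21
    field_simp
    simp only [arsinhNum, arsinhDen]
    ring
  have hpoly : 0 < 4103504584058880000 + 7389715650143904000 * u +
      4178053544367830400 * u ^ 2 + 657760124031977880 * u ^ 3 - 63326304812956860 * u ^ 4 -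
      19839585508141251 * u ^ 5 - 730542100002854 * u ^ 6 + 16756588563739 * u ^ 7 := by
    have : u ^ 4 ≤ 1 := pow_le_one₀ hu0.le hu1.le
    have : u ^ 5 ≤ 1 := pow_le_one₀ hu0.le hu1.le
    have : u ^ 6 ≤ 1 := pow_le_one₀ hu0.le hu1.le
    nlinarith [pow_pos hu0 2, pow_pos hu0 3, pow_pos hu0 7]
  have : 0 < 8 / 25 * logPade22 (1 + u / 6) + 17 / 150 * logPade22 (1 + u) -
      logPade21 (arsinhDen u / arsinhNum u) := by
    rw [hgap]; positivity
  linarith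

theorem log_arsinhDen_div_arsinhNum_lt {u : ℝ} (hu0 : 0 < u) (hu1 : u < 1) :
    log (arsinhDen u / arsinhNum u) < 8 / 25 * log (1 + u / 6) + 17 / 150 * log (1 + u) := by
  have hP := arsinhNum_pos hu0.le hu1.le
  have hPQ : 1 ≤ arsinhDen u / arsinhNum u := by
    rw [one_le_div hP]
    simp only [arsinhNum, arsinhDen]
    nlinarith [pow_pos hu0 2, pow_pos hu0 3]
  calc log (arsinhDen u / arsinhNum u) ≤ logPade21 (arsinhDen u / arsinhNum u) :=
        log_le_logPade21 hPQ
    _ < 8 / 25 * logPade22 (1 + u / 6) + 17 / 150 * logPade22 (1 + u) :=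
        logPade21_arsinhDen_div_arsinhNum_lt hu0 hu1
    _ ≤ 8 / 25 * log (1 + u / 6) + 17 / 150 * log (1 + u) := by
        gcongr <;> exact logPade22_le_log (by linarith)

theorem div_arsinh_lt_of_pos {t : ℝ} (ht0 : 0 < t) (ht1 : t < 1) :
    t / arsinh t < (1 + t ^ 2 / 6) ^ ((8 : ℝ) / 25) * (1 + t ^ 2) ^ ((17 : ℝ) / 150) := by
  have hu0 : 0 < t ^ 2 := by positivity
  have hu1 : t ^ 2 < 1 := by nlinarith
  calc t / arsinh t ≤ arsinhDen (t ^ 2) / arsinhNum (t ^ 2) := div_arsinh_le_s5 ht0 ht1.le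
    _ < _ := by
      have hP := arsinhNum_pos hu0.le hu1.le
      have hQ := arsinhDen_pos hu0.le
      rw [← log_lt_log_iff (by positivity) (by positivity),
        log_mul (by positivity) (by positivity), log_rpow (by positivity), log_rpow (by positivity)]
      linarith [log_arsinhDen_div_arsinhNum_lt hu0 hu1]

theorem div_arsinh_lt {t : ℝ} (ht0 : t ≠ 0) (ht1 : |t| < 1) :
    t / arsinh t < (1 + t ^ 2 / 6) ^ ((8 : ℝ) / 25) * (1 + t ^ 2) ^ ((17 : ℝ) / 150) := by
  have heven : |t| / arsinh |t| = t / arsinh t := by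
    rcases abs_choice t with h | h <;> rw [h]
    rw [arsinh_neg, neg_div_neg_eq]
  rw [← heven, ← sq_abs t]
  exact div_arsinh_lt_of_pos (abs_pos.2 ht0) ht1

theorem Amean_pos {a b : ℝ} (h : 0 < a + b) : 0 < Amean a b := by
  unfold Amean; positivity

theorem NSmean_eq {a b : ℝ} (h : a + b ≠ 0) :
    NSmean a b = Amean a b * ((a - b) / (a + b) / arsinh ((a - b) / (a + b))) := by
  have hhalf : (a + b) / 2 * ((a - b) / (a + b)) = (a - b) / 2 := by field_simp
  unfold NSmean Amean
  rw [← mul_div_assoc, hhalf, div_div]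

theorem Cmean_eq {a b : ℝ} (h : a + b ≠ 0) :
    Cmean a b = Amean a b * (1 + ((a - b) / (a + b)) ^ 2) := by
  unfold Cmean Amean
  field_simp
  ring

theorem mul_combination_rpow_eq {s u : ℝ} (hs : 0 < s) (hu : 0 ≤ u) :
    (s * (1 + u) / 6 + 5 * s / 6) ^ ((8 : ℝ) / 25) *
        ((s * (1 + u)) ^ ((1 : ℝ) / 6) * s ^ ((5 : ℝ) / 6)) ^ ((17 : ℝ) / 25) =
      s * ((1 + u / 6) ^ ((8 : ℝ) / 25) * (1 + u) ^ ((17 : ℝ) / 150)) := by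
  have hgeo :
      (s * (1 + u)) ^ ((1 : ℝ) / 6) * s ^ ((5 : ℝ) / 6) = s * (1 + u) ^ ((1 : ℝ) / 6) := by
    rw [mul_rpow hs.le (by positivity), mul_right_comm, ← rpow_add hs]
    norm_num
  rw [hgeo, show s * (1 + u) / 6 + 5 * s / 6 = s * (1 + u / 6) by ring,
    mul_rpow hs.le (by positivity), mul_rpow hs.le (by positivity), ← rpow_mul (by positivity)]
  calc s ^ ((8 : ℝ) / 25) * (1 + u / 6) ^ ((8 : ℝ) / 25) *
        (s ^ ((17 : ℝ) / 25) * (1 + u) ^ ((1 : ℝ) / 6 * (17 / 25)))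
      = s ^ ((8 : ℝ) / 25 + 17 / 25) * ((1 + u / 6) ^ ((8 : ℝ) / 25) *
          (1 + u) ^ ((1 : ℝ) / 6 * (17 / 25))) := by rw [rpow_add hs]; ring
    _ = _ := by norm_num

theorem stmt_5 (a b : ℝ) (ha : 0 < a) (hb : 0 < b) (hab : a ≠ b) :
    NSmean a b < (Cmean a b / 6 + 5 * Amean a b / 6) ^ ((8 : ℝ) / 25) *
      (Cmean a b ^ ((1 : ℝ) / 6) * Amean a b ^ ((5 : ℝ) / 6)) ^ ((17 : ℝ) / 25) := by
  have hs : 0 < a + b := by linarith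
  have ht0 : (a - b) / (a + b) ≠ 0 := div_ne_zero (sub_ne_zero.2 hab) hs.ne'
  have ht1 : |(a - b) / (a + b)| < 1 := by
    rw [abs_div, abs_of_pos hs, div_lt_one hs, abs_lt]
    constructor <;> linarith
  rw [NSmean_eq hs.ne', Cmean_eq hs.ne', mul_combination_rpow_eq (Amean_pos hs) (sq_nonneg _)]
  exact mul_lt_mul_of_pos_left (div_arsinh_lt ht0 ht1) (Amean_pos hs)
end

section
/- The constant 8/25 is best possible: if μ < 8/25, then there exist a, b > 0 with a ≠ b such that M(a,b) > (C(a,b)/6 + 5A(a,b)/6)^μ · (C(a,b)^(1/6) A(a,b)^(5/6))^(1-μ). -/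
open Real

set_option maxHeartbeats 1000000

lemma my_exp_ub {w : ℝ} (h0 : 0 ≤ w) (h1 : w ≤ 1) :
    Real.exp w ≤ 1 + w + w^2/2 + (2/9)*w^3 := by
  have h := Real.exp_bound (n := 3) (by rw [abs_of_nonneg h0]; exact h1) (by norm_num)
  have h2 := (abs_sub_le_iff.1 h).1
  rw [abs_of_nonneg h0] at h2
  simp [Finset.sum_range_succ, Nat.factorial] at h2
  nlinarith [h2]

lemma my_exp_lb {w : ℝ} (h0 : 0 ≤ w) :
    1 + w + w^2/2 + w^3/6 ≤ Real.exp w := by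
  have h := Real.sum_le_exp_of_nonneg h0 4
  simp [Finset.sum_range_succ, Nat.factorial] at h
  nlinarith [h]

lemma my_log_lb {y : ℝ} (h0 : 0 ≤ y) (h1 : y ≤ 1) :
    y - y^2/2 ≤ Real.log (1 + y) := by
  have hw0 : 0 ≤ y - y^2/2 := by nlinarith
  have hw1 : y - y^2/2 ≤ 1 := by nlinarith
  have he : Real.exp (y - y^2/2) ≤ 1 + y := by
    have := my_exp_ub hw0 hw1
    nlinarith [this]
  calc y - y^2/2 = Real.log (Real.exp (y - y^2/2)) := (Real.log_exp _).symm
    _ ≤ Real.log (1 + y) := Real.log_le_log (Real.exp_pos _) he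

lemma my_log_ub {y : ℝ} (h0 : 0 ≤ y) (h1 : y ≤ 1) :
    Real.log (1 + y) ≤ y - y^2/2 + y^3/3 := by
  have hw0 : 0 ≤ y - y^2/2 + y^3/3 := by nlinarith
  have he : 1 + y ≤ Real.exp (y - y^2/2 + y^3/3) := by
    have h := my_exp_lb hw0
    have key : 1 + y ≤ 1 + (y - y^2/2 + y^3/3) + (y - y^2/2 + y^3/3)^2/2
        + (y - y^2/2 + y^3/3)^3/6 := by
      nlinarith [pow_nonneg h0 4, pow_nonneg h0 5, pow_nonneg h0 6, pow_nonneg h0 7,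
        pow_nonneg h0 8, pow_nonneg h0 9, mul_nonneg (pow_nonneg h0 5) (sub_nonneg.2 h1),
        mul_nonneg (pow_nonneg h0 6) (sub_nonneg.2 h1),
        mul_nonneg (pow_nonneg h0 7) (sub_nonneg.2 h1),
        mul_nonneg (pow_nonneg h0 8) (sub_nonneg.2 h1)]
    linarith
  calc Real.log (1 + y) ≤ Real.log (Real.exp (y - y^2/2 + y^3/3)) :=
        Real.log_le_log (by linarith) he
    _ = y - y^2/2 + y^3/3 := Real.log_exp _

lemma my_sinh_lb {s : ℝ} (h0 : 0 ≤ s) (h1 : s ≤ 1) :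
    s + s^3/6 + s^5/120 ≤ Real.sinh s := by
  have ha : |s| ≤ 1 := by rw [abs_of_nonneg h0]; exact h1
  have hb : |(-s)| ≤ 1 := by rw [abs_neg]; exact ha
  have e1 := (abs_sub_le_iff.1 (Real.exp_bound (n := 8) ha (by norm_num))).2
  have e2 := (abs_sub_le_iff.1 (Real.exp_bound (n := 8) hb (by norm_num))).1
  rw [abs_of_nonneg h0] at e1
  rw [abs_neg, abs_of_nonneg h0] at e2
  simp [Finset.sum_range_succ, Nat.factorial] at e1 e2
  rw [Real.sinh_eq]
  nlinarith [e1, e2, pow_nonneg h0 7, mul_nonneg (pow_nonneg h0 7) (sub_nonneg.2 h1)]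

lemma my_sinh_ub {s : ℝ} (h0 : 0 ≤ s) (h1 : s ≤ 1) :
    Real.sinh s ≤ s + s^3/6 + s^5/120 + 7*s^6/4320 := by
  have ha : |s| ≤ 1 := by rw [abs_of_nonneg h0]; exact h1
  have hb : |(-s)| ≤ 1 := by rw [abs_neg]; exact ha
  have e1 := (abs_sub_le_iff.1 (Real.exp_bound (n := 6) ha (by norm_num))).1
  have e2 := (abs_sub_le_iff.1 (Real.exp_bound (n := 6) hb (by norm_num))).2
  rw [abs_of_nonneg h0] at e1
  rw [abs_neg, abs_of_nonneg h0] at e2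
  simp [Finset.sum_range_succ, Nat.factorial] at e1 e2
  rw [Real.sinh_eq]
  nlinarith [e1, e2]

lemma polyKey {u μ : ℝ} (hu0 : 0 < u) (hu1 : u ≤ 9/100) (hμ0 : 0 ≤ μ)
    (hc : 4*u ≤ 8/25 - μ) :
    μ * ((u+u^2/3+u^3/20)/6 - ((u+u^2/3+u^3/20)/6)^2/2 + ((u+u^2/3+u^3/20)/6)^3/3)
      + (1-μ)/6 * ((u+u^2/3+u^3/20) - (u+u^2/3+u^3/20)^2/2 + (u+u^2/3+u^3/20)^3/3)
      < (u/6+u^2/120) - (u/6+u^2/120)^2/2 := by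
  set X : ℝ := u+u^2/3+u^3/20 with hX
  have h9 : (0:ℝ) ≤ 9/100 - u := by linarith
  have hB : 0 ≤ (X/6 - (X/6)^2/2 + (X/6)^3/3) - (1/6)*(X - X^2/2 + X^3/3) := by
    rw [hX]
    nlinarith [mul_nonneg (sq_nonneg u) h9, mul_nonneg (mul_nonneg (sq_nonneg u) hu0.le) h9,
      mul_nonneg (mul_nonneg (sq_nonneg u) (sq_nonneg u)) h9,
      mul_nonneg (mul_nonneg (pow_nonneg hu0.le 5) hu0.le) h9,
      mul_nonneg (mul_nonneg (pow_nonneg hu0.le 6) hu0.le) h9,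
      mul_nonneg (mul_nonneg (pow_nonneg hu0.le 7) hu0.le) h9]
  have hμle : μ ≤ 8/25 - 4*u := by linarith
  have hP : (1/6)*(X - X^2/2 + X^3/3)
      + (8/25-4*u) * ((X/6 - (X/6)^2/2 + (X/6)^3/3) - (1/6)*(X - X^2/2 + X^3/3))
      < (u/6+u^2/120) - (u/6+u^2/120)^2/2 := by
    rw [hX]
    nlinarith [mul_pos (mul_pos hu0 hu0) hu0,
      mul_nonneg (mul_nonneg (mul_nonneg hu0.le hu0.le) hu0.le) h9,
      mul_nonneg (mul_nonneg (sq_nonneg u) (sq_nonneg u)) h9,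
      mul_nonneg (mul_nonneg (pow_nonneg hu0.le 5) hu0.le) h9,
      mul_nonneg (mul_nonneg (pow_nonneg hu0.le 6) hu0.le) h9,
      mul_nonneg (mul_nonneg (pow_nonneg hu0.le 7) hu0.le) h9,
      mul_nonneg (mul_nonneg (pow_nonneg hu0.le 8) hu0.le) h9]
  have hmono : μ * ((X/6 - (X/6)^2/2 + (X/6)^3/3) - (1/6)*(X - X^2/2 + X^3/3))
      ≤ (8/25-4*u) * ((X/6 - (X/6)^2/2 + (X/6)^3/3) - (1/6)*(X - X^2/2 + X^3/3)) :=
    mul_le_mul_of_nonneg_right hμle hB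
  nlinarith [hP, hmono]

lemma Lmono {y y' : ℝ} (h0 : 0 ≤ y) (h : y ≤ y') (h1 : y' ≤ 1) :
    y - y^2/2 + y^3/3 ≤ y' - y'^2/2 + y'^3/3 := by
  nlinarith [sq_nonneg (y+y'), sq_nonneg (y-y'), mul_nonneg h0 (h0.trans h), h, h1]

lemma my_sinh_sq_ub {s : ℝ} (h0 : 0 < s) (h3 : s ≤ 3/10) :
    Real.sinh s ^ 2 ≤ s^2 + (s^2)^2/3 + (s^2)^3/20 := by
  have hub := my_sinh_ub h0.le (by linarith)
  have h110 : Real.sinh s ≤ s + s^3/6 + s^5/110 := by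
    nlinarith [hub, pow_nonneg h0.le 5, mul_nonneg (pow_nonneg h0.le 5) (by linarith : (0:ℝ) ≤ 3/10 - s)]
  have hpos : 0 ≤ Real.sinh s := (Real.sinh_pos_iff.2 h0).le
  calc Real.sinh s ^ 2 ≤ (s + s^3/6 + s^5/110)^2 := by nlinarith [hpos, h110]
    _ ≤ s^2 + (s^2)^2/3 + (s^2)^3/20 := by
        nlinarith [mul_nonneg (pow_nonneg h0.le 6) (by nlinarith : (0:ℝ) ≤ 9/100 - s^2),
          mul_nonneg (mul_nonneg (pow_nonneg h0.le 6) (sq_nonneg s)) (by nlinarith : (0:ℝ) ≤ 9/100 - s^2),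
          pow_nonneg h0.le 6, pow_nonneg h0.le 8, pow_nonneg h0.le 10]

theorem stmt_6 (μ : ℝ) (hμ : μ < 8 / 25) :
    ∃ a b : ℝ, 0 < a ∧ 0 < b ∧ a ≠ b ∧
      (Cmean a b / 6 + 5 * Amean a b / 6) ^ μ *
        (Cmean a b ^ ((1 : ℝ) / 6) * Amean a b ^ ((5 : ℝ) / 6)) ^ (1 - μ) < NSmean a b := by
  set μ' : ℝ := max μ 0 with hμ'def
  have hμ'0 : 0 ≤ μ' := le_max_right _ _
  have hμμ' : μ ≤ μ' := le_max_left _ _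
  have hμ'lt : μ' < 8/25 := max_lt hμ (by norm_num)
  set δ : ℝ := 8/25 - μ' with hδdef
  have hδ0 : 0 < δ := by simp only [hδdef]; linarith
  set s : ℝ := min (3/10) (Real.sqrt δ / 2) with hsdef
  have hs0 : 0 < s := lt_min (by norm_num) (by positivity)
  have hs3 : s ≤ 3/10 := min_le_left _ _
  have hs1 : s ≤ 1 := by linarith
  set u : ℝ := s^2 with hudef
  have hu0 : 0 < u := by positivity
  have hu9 : u ≤ 9/100 := by
    have : s^2 ≤ (3/10)^2 := by nlinarith
    simpa [hudef] using this.trans (by norm_num)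
  have hc : 4*u ≤ 8/25 - μ' := by
    have h1 : s ≤ Real.sqrt δ / 2 := min_le_right _ _
    have h2 : (Real.sqrt δ)^2 = δ := Real.sq_sqrt hδ0.le
    have : s^2 ≤ (Real.sqrt δ / 2)^2 := by
      apply pow_le_pow_left₀ hs0.le h1
    have h4 : (Real.sqrt δ / 2)^2 = δ/4 := by rw [div_pow, h2]; norm_num
    have h3 : u ≤ δ/4 := by rw [hudef]; linarith
    simp only [hδdef] at h3; linarith
  set t : ℝ := Real.sinh s with htdef
  have ht0 : 0 < t := by rw [htdef]; exact Real.sinh_pos_iff.2 hs0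
  have htub : t ≤ s + s^3/6 + s^5/120 + 7*s^6/4320 := my_sinh_ub hs0.le hs1
  have htlb : s + s^3/6 + s^5/120 ≤ t := my_sinh_lb hs0.le hs1
  have ht1 : t < 1 := by nlinarith [htub, hs3, hs0.le]
  refine ⟨1 + t, 1 - t, by linarith, by linarith, by intro h; nlinarith, ?_⟩
  -- rewrite the means
  have hC : Cmean (1+t) (1-t) = 1 + t^2 := by
    simp only [Cmean]
    rw [show (1+t) + (1-t) = (2:ℝ) by ring]
    ring
  have hA : Amean (1+t) (1-t) = 1 := by
    simp only [Amean]; ring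
  have hN : NSmean (1+t) (1-t) = t / s := by
    simp only [NSmean]
    rw [show (1+t) - (1-t) = 2*t by ring, show (1+t) + (1-t) = (2:ℝ) by ring,
      show (2*t)/2 = t by ring, htdef, Real.arsinh_sinh]
    rw [mul_div_mul_left t s (two_ne_zero)]
  rw [hC, hA, hN, Real.one_rpow, show (5:ℝ)*1/6 = 5/6 by norm_num, mul_one,
    show (1+t^2)/6 + 5/6 = 1 + t^2/6 by ring]
  -- now the goal: (1+t^2/6)^μ * ((1+t^2)^(1/6))^(1-μ) < t/s
  set x : ℝ := t^2 with hxdef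
  have hx0 : 0 < x := by positivity
  have hxX : x ≤ u + u^2/3 + u^3/20 := by
    rw [hxdef, hudef, htdef]
    exact my_sinh_sq_ub hs0 hs3
  have hX1 : u + u^2/3 + u^3/20 ≤ 1/10 := by nlinarith [hu9, hu0.le]
  have hx1 : x ≤ 1 := by linarith
  have hp1 : (0:ℝ) < 1 + x/6 := by linarith
  have hp2 : (0:ℝ) < 1 + x := by linarith
  have hq2 : (0:ℝ) < (1+x) ^ ((1:ℝ)/6) := Real.rpow_pos_of_pos hp2 _
  have hLHS : (0:ℝ) < (1 + x/6) ^ μ * ((1+x) ^ ((1:ℝ)/6)) ^ (1-μ) :=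
    mul_pos (Real.rpow_pos_of_pos hp1 _) (Real.rpow_pos_of_pos hq2 _)
  have hts : (0:ℝ) < t/s := div_pos ht0 hs0
  rw [← Real.log_lt_log_iff hLHS hts]
  -- compute the log of LHS
  have hlog : Real.log ((1 + x/6) ^ μ * ((1+x) ^ ((1:ℝ)/6)) ^ (1-μ))
      = μ * Real.log (1 + x/6) + (1-μ) * ((1/6) * Real.log (1+x)) := by
    rw [Real.log_mul (ne_of_gt (Real.rpow_pos_of_pos hp1 _))
      (ne_of_gt (Real.rpow_pos_of_pos hq2 _)), Real.log_rpow hp1,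
      Real.log_rpow hq2, Real.log_rpow hp2]
  rw [hlog]
  -- monotonicity in μ : replace μ by μ'
  have hG : 0 ≤ Real.log (1 + x/6) - (1/6) * Real.log (1+x) := by
    have h6 : (1+x) ≤ (1 + x/6)^(6:ℕ) := by
      nlinarith [sq_nonneg x, pow_nonneg hx0.le 3, pow_nonneg hx0.le 4,
        pow_nonneg hx0.le 5, pow_nonneg hx0.le 6]
    have := Real.log_le_log hp2 h6
    rw [Real.log_pow] at this
    push_cast at this
    linarith
  have hstep1 : μ * Real.log (1 + x/6) + (1-μ) * ((1/6) * Real.log (1+x))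
      ≤ μ' * Real.log (1 + x/6) + (1-μ') * ((1/6) * Real.log (1+x)) := by
    nlinarith [mul_le_mul_of_nonneg_right hμμ'
      (hG)]
  -- bound the logs by polynomials
  set X : ℝ := u + u^2/3 + u^3/20 with hXdef
  have hX0 : 0 ≤ X := by positivity
  clear_value X
  have hlog1 : Real.log (1 + x/6) ≤ X/6 - (X/6)^2/2 + (X/6)^3/3 := by
    calc Real.log (1 + x/6) ≤ x/6 - (x/6)^2/2 + (x/6)^3/3 :=
          my_log_ub (by positivity) (by linarith)
      _ ≤ X/6 - (X/6)^2/2 + (X/6)^3/3 :=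
          Lmono (by positivity) (by linarith [hxX]) (by linarith [hX1])
  have hlog2 : Real.log (1 + x) ≤ X - X^2/2 + X^3/3 := by
    calc Real.log (1 + x) ≤ x - x^2/2 + x^3/3 := my_log_ub hx0.le hx1
      _ ≤ X - X^2/2 + X^3/3 := Lmono hx0.le hxX (by linarith [hX1])
  -- lower bound for log (t/s)
  set z : ℝ := u/6 + u^2/120 with hzdef
  have hz0 : 0 ≤ z := by positivity
  have hz1 : z ≤ 1 := by rw [hzdef]; nlinarith [hu9, hu0.le]
  clear_value z
  have hts2 : 1 + z ≤ t/s := by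
    rw [le_div_iff₀ hs0]
    rw [hzdef, hudef]
    nlinarith [htlb]
  have hlog3 : z - z^2/2 ≤ Real.log (t/s) := by
    calc z - z^2/2 ≤ Real.log (1+z) := my_log_lb hz0 hz1
      _ ≤ Real.log (t/s) := Real.log_le_log (by linarith) hts2
  -- core polynomial inequality
  have hkey := polyKey hu0 hu9 hμ'0 hc
  rw [← hXdef, ← hzdef] at hkey
  have h1μ' : 0 ≤ (1-μ')/6 := by linarith
  have hμterm : μ' * Real.log (1 + x/6) ≤ μ' * (X/6 - (X/6)^2/2 + (X/6)^3/3) :=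
    mul_le_mul_of_nonneg_left hlog1 hμ'0
  have hμterm2 : (1-μ') * ((1/6) * Real.log (1+x)) ≤ (1-μ')/6 * (X - X^2/2 + X^3/3) := by
    have := mul_le_mul_of_nonneg_left hlog2 h1μ'
    linarith [this]
  linarith [hstep1, hμterm, hμterm2, hkey, hlog3]
end

section
/- The function h(t) = (90t + 52t·cosh(2t) - 66·sinh(2t) + 2t·cosh(4t) - 3·sinh(4t)) / (15t - 20t·cosh(2t) + 5t·cosh(4t)) is strictly decreasing on (0, log(1+√2)). -/
/-!
Write `s = sinh t`, `c = cosh t`. The double-angle formulas turn numerator and denominator into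
`8 (18t + 15ts² + 2ts⁴ - 18sc - 3s³c)` and `8 (5ts⁴)`. Using `c² = 1 + s²`, the numerator of the
derivative of the reduced quotient is `15 s³ E` with `E = 18ts + 13ts³ + 6s²c + s⁴c - 24t²c - 10t²s²c`.
Since `E` vanishes to order 8 at `0`, it is estimated by Taylor polynomials of `sinh` and `cosh`
(from above in the positive terms, from below in the negative ones); the resulting polynomial in `t`
is negative on `(0, 1)`, which contains `(0, log (1 + √2))`.
-/

open Real

theorem strictAntiOn_div_of_hasDerivAt {f g f' g' : ℝ → ℝ} {D : Set ℝ} (hD : Convex ℝ D)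
    (hDo : IsOpen D) (hf : ∀ x ∈ D, HasDerivAt f (f' x) x) (hg : ∀ x ∈ D, HasDerivAt g (g' x) x)
    (hg0 : ∀ x ∈ D, g x ≠ 0) (hneg : ∀ x ∈ D, f' x * g x - f x * g' x < 0) :
    StrictAntiOn (fun x => f x / g x) D := by
  refine strictAntiOn_of_deriv_neg hD (fun x hx => ?_) fun x hx => ?_
  · exact ((hf x hx).continuousAt.div (hg x hx).continuousAt (hg0 x hx)).continuousWithinAt
  · rw [hDo.interior_eq] at hx
    rw [((hf x hx).fun_div (hg x hx) (hg0 x hx)).deriv]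
    exact div_neg_of_neg_of_pos (hneg x hx) (by positivity [hg0 x hx])

theorem cosh_two_mul_eq (x : ℝ) : cosh (2 * x) = 1 + 2 * sinh x ^ 2 := by
  rw [cosh_two_mul, cosh_sq']; ring

theorem cosh_four_mul_eq (x : ℝ) : cosh (4 * x) = 1 + 8 * sinh x ^ 2 + 8 * sinh x ^ 4 := by
  rw [show 4 * x = 2 * (2 * x) by ring, cosh_two_mul_eq, sinh_two_mul]
  linear_combination 8 * sinh x ^ 2 * cosh_sq' x

theorem sinh_four_mul_eq (x : ℝ) : sinh (4 * x) = 4 * sinh x * cosh x * (1 + 2 * sinh x ^ 2) := by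
  rw [show 4 * x = 2 * (2 * x) by ring, sinh_two_mul, sinh_two_mul, cosh_two_mul_eq]; ring

noncomputable def reducedNum (t : ℝ) : ℝ :=
  18 * t + 15 * (t * sinh t ^ 2) + 2 * (t * sinh t ^ 4) - 18 * (sinh t * cosh t) -
    3 * (sinh t ^ 3 * cosh t)

noncomputable def reducedDen (t : ℝ) : ℝ := 5 * (t * sinh t ^ 4)

theorem quotient_eq_reduced :
    (fun t : ℝ => (90 * t + 52 * t * cosh (2 * t) - 66 * sinh (2 * t) + 2 * t * cosh (4 * t) -
        3 * sinh (4 * t)) / (15 * t - 20 * t * cosh (2 * t) + 5 * t * cosh (4 * t))) =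
      fun t => reducedNum t / reducedDen t := by
  funext t
  rw [cosh_two_mul_eq, sinh_two_mul, cosh_four_mul_eq, sinh_four_mul_eq, reducedNum, reducedDen]
  ring

theorem hasDerivAt_reducedNum (x : ℝ) : HasDerivAt reducedNum
    (-30 * sinh x ^ 2 - 10 * sinh x ^ 4 + 30 * x * sinh x * cosh x + 8 * x * sinh x ^ 3 * cosh x)
    x := by
  have hs := hasDerivAt_sinh x
  have hc := hasDerivAt_cosh x
  have ht := hasDerivAt_id' x
  refine ((((ht.const_mul 18).fun_add ((ht.fun_mul (hs.fun_pow 2)).const_mul 15)).fun_add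
    ((ht.fun_mul (hs.fun_pow 4)).const_mul 2)).fun_sub ((hs.fun_mul hc).const_mul 18)).fun_sub
    (((hs.fun_pow 3).fun_mul hc).const_mul 3) |>.congr_deriv ?_
  push_cast
  linear_combination (-18 - 9 * sinh x ^ 2) * cosh_sq' x

theorem hasDerivAt_reducedDen (x : ℝ) :
    HasDerivAt reducedDen (5 * sinh x ^ 4 + 20 * x * sinh x ^ 3 * cosh x) x := by
  refine ((hasDerivAt_id' x).fun_mul ((hasDerivAt_sinh x).fun_pow 4)).const_mul 5 |>.congr_deriv ?_
  push_cast
  ring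

theorem reduced_cross_eq (x : ℝ) :
    (-30 * sinh x ^ 2 - 10 * sinh x ^ 4 + 30 * x * sinh x * cosh x + 8 * x * sinh x ^ 3 * cosh x) *
        reducedDen x - reducedNum x * (5 * sinh x ^ 4 + 20 * x * sinh x ^ 3 * cosh x) =
      15 * sinh x ^ 3 * (18 * x * sinh x + 13 * x * sinh x ^ 3 + 6 * sinh x ^ 2 * cosh x +
        sinh x ^ 4 * cosh x - 24 * x ^ 2 * cosh x - 10 * x ^ 2 * sinh x ^ 2 * cosh x) := by
  rw [reducedNum, reducedDen]
  linear_combination (360 * x * sinh x ^ 4 + 60 * x * sinh x ^ 6) * cosh_sq' x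

noncomputable def sinhLower (t : ℝ) : ℝ := t + t ^ 3 / 6 + t ^ 5 / 120

-- `4960 < 7!` and `39000 < 8!`: the slack absorbs the remainder of `Real.exp_bound` at order 10.
noncomputable def sinhUpper (t : ℝ) : ℝ := t + t ^ 3 / 6 + t ^ 5 / 120 + t ^ 7 / 4960

noncomputable def coshLower (t : ℝ) : ℝ := 1 + t ^ 2 / 2 + t ^ 4 / 24 + t ^ 6 / 720

noncomputable def coshUpper (t : ℝ) : ℝ := 1 + t ^ 2 / 2 + t ^ 4 / 24 + t ^ 6 / 720 + t ^ 8 / 39000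

theorem sinh_cosh_taylor_bounds {t : ℝ} (h0 : 0 ≤ t) (h1 : t ≤ 1) :
    sinhLower t ≤ sinh t ∧ sinh t ≤ sinhUpper t ∧ coshLower t ≤ cosh t ∧ cosh t ≤ coshUpper t := by
  have hpos := abs_le.1 <| exp_bound (x := t) (by rwa [abs_of_nonneg h0]) (n := 10) (by norm_num)
  have hneg := abs_le.1 <| exp_bound (x := -t) (by rwa [abs_neg, abs_of_nonneg h0]) (n := 10)
    (by norm_num)
  simp only [abs_neg, abs_of_nonneg h0, Finset.sum_range_succ, Finset.sum_range_zero] at hpos hneg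
  norm_num [Nat.factorial] at hpos hneg
  have h97 : t ^ 9 ≤ t ^ 7 := pow_le_pow_of_le_one h0 h1 (by norm_num)
  have h107 : t ^ 10 ≤ t ^ 7 := pow_le_pow_of_le_one h0 h1 (by norm_num)
  have h108 : t ^ 10 ≤ t ^ 8 := pow_le_pow_of_le_one h0 h1 (by norm_num)
  have h9 : 0 ≤ t ^ 9 := by positivity
  have h10 : 0 ≤ t ^ 10 := by positivity
  rw [sinh_eq, cosh_eq, sinhLower, sinhUpper, coshLower, coshUpper]
  refine ⟨?_, ?_, ?_, ?_⟩ <;> linarith [hpos.1, hpos.2, hneg.1, hneg.2]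

theorem taylor_majorant_neg {t : ℝ} (ht0 : 0 < t) (ht1 : t < 1) :
    18 * t * sinhUpper t + 13 * t * sinhUpper t ^ 3 + 6 * sinhUpper t ^ 2 * coshUpper t +
      sinhUpper t ^ 4 * coshUpper t - 24 * t ^ 2 * coshLower t -
      10 * t ^ 2 * sinhLower t ^ 2 * coshLower t < 0 := by
  -- Expanded: `-7367/22320 t⁸ - 801547/21762000 t¹⁰ + …`, and the coefficients from `t¹²` on are
  -- positive but sum to far less than `7367/22320`.
  have e : ∀ k ≥ 8, t ^ k ≤ t ^ 8 := fun k hk => pow_le_pow_of_le_one ht0.le ht1.le hk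
  simp only [sinhLower, sinhUpper, coshLower, coshUpper]
  linarith [pow_pos ht0 8, pow_pos ht0 10, e 12 (by norm_num), e 14 (by norm_num),
    e 16 (by norm_num), e 18 (by norm_num), e 20 (by norm_num), e 22 (by norm_num),
    e 24 (by norm_num), e 26 (by norm_num), e 28 (by norm_num), e 30 (by norm_num),
    e 32 (by norm_num), e 34 (by norm_num), e 36 (by norm_num)]

theorem cross_poly_neg {t s c : ℝ} (ht0 : 0 < t) (ht1 : t < 1) (hsl : sinhLower t ≤ s)
    (hsu : s ≤ sinhUpper t) (hcl : coshLower t ≤ c) (hcu : c ≤ coshUpper t) :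
    18 * t * s + 13 * t * s ^ 3 + 6 * s ^ 2 * c + s ^ 4 * c - 24 * t ^ 2 * c -
      10 * t ^ 2 * s ^ 2 * c < 0 := by
  have hsl0 : 0 ≤ sinhLower t := by unfold sinhLower; positivity
  have hcl0 : 0 ≤ coshLower t := by unfold coshLower; positivity
  have hs : 0 ≤ s := hsl0.trans hsl
  have hc : 0 ≤ c := hcl0.trans hcl
  calc _ ≤ 18 * t * sinhUpper t + 13 * t * sinhUpper t ^ 3 + 6 * sinhUpper t ^ 2 * coshUpper t +
        sinhUpper t ^ 4 * coshUpper t - 24 * t ^ 2 * coshLower t -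
        10 * t ^ 2 * sinhLower t ^ 2 * coshLower t := by gcongr
    _ < 0 := taylor_majorant_neg ht0 ht1

theorem log_one_add_sqrt_two_lt_one : log (1 + √2) < 1 := by
  have hsqrt : √2 < 1.5 := by
    nlinarith [sq_sqrt (by norm_num : (0 : ℝ) ≤ 2), sqrt_nonneg 2]
  rw [log_lt_iff_lt_exp (by positivity)]
  linarith [exp_one_gt_d9]

theorem stmt_7 :
    StrictAntiOn (fun t : ℝ =>
      (90 * t + 52 * t * Real.cosh (2 * t) - 66 * Real.sinh (2 * t) +
        2 * t * Real.cosh (4 * t) - 3 * Real.sinh (4 * t)) /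
      (15 * t - 20 * t * Real.cosh (2 * t) + 5 * t * Real.cosh (4 * t)))
      (Set.Ioo 0 (Real.log (1 + Real.sqrt 2))) := by
  rw [quotient_eq_reduced]
  refine strictAntiOn_div_of_hasDerivAt (convex_Ioo _ _) isOpen_Ioo
    (fun x _ => hasDerivAt_reducedNum x) (fun x _ => hasDerivAt_reducedDen x)
    (fun x ⟨hx0, _⟩ => ?_) (fun x ⟨hx0, hxlog⟩ => ?_)
  · unfold reducedDen
    have := sinh_pos_iff.2 hx0
    positivity
  · have hx1 := hxlog.trans log_one_add_sqrt_two_lt_one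
    obtain ⟨hsl, hsu, hcl, hcu⟩ := sinh_cosh_taylor_bounds hx0.le hx1.le
    have := sinh_pos_iff.2 hx0
    rw [reduced_cross_eq]
    exact mul_neg_of_pos_of_neg (by positivity) (cross_poly_neg hx0 hx1 hsl hsu hcl hcu)
end

section
/- The sequence a_n/b_n, where a_n = [16 + 13n + (2n-1)·2^(2n+2)]·2^(2n+7)/(2n+5)! and b_n = 5·(2^(2n+2)-1)·2^(2n+6)/(2n+4)!, is strictly decreasing for 0 ≤ n ≤ 2 and strictly increasing for n ≥ 3. -/
noncomputable def aseq (n : ℕ) : ℚ :=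
  (16 + 13 * (n : ℚ) + (2 * (n : ℚ) - 1) * 2 ^ (2 * n + 2)) * 2 ^ (2 * n + 7) /
    (Nat.factorial (2 * n + 5))
noncomputable def bseq (n : ℕ) : ℚ :=
  5 * ((2 : ℚ) ^ (2 * n + 2) - 1) * 2 ^ (2 * n + 6) / (Nat.factorial (2 * n + 4))

/-! With `x = 2 ^ (2n + 2)` the factorials and powers of two cancel, leaving
`aₙ / bₙ = quotientFormula n x`. Passing from `n` to `n + 1` replaces `x` by `4x`, and the sign of
the difference of consecutive quotients is that of `48x² - (90n² + 405n + 330)x - 33`.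
Since `x ≥ 4(n + 1)²`, this is positive once `n ≥ 2`; for `n = 0, 1` it is evaluated. -/

def quotientFormula (n x : ℚ) : ℚ :=
  2 * (16 + 13 * n + (2 * n - 1) * x) / (5 * (x - 1) * (2 * n + 5))

lemma one_lt_two_pow_two_mul_add_two (n : ℕ) : (1 : ℚ) < 2 ^ (2 * n + 2) :=
  one_lt_pow₀ (by norm_num) (by omega)

lemma four_mul_sq_succ_le_two_pow (n : ℕ) : 4 * ((n : ℚ) + 1) ^ 2 ≤ 2 ^ (2 * n + 2) := by
  have h : ((n + 1 : ℕ) : ℚ) ≤ 2 ^ n := by exact_mod_cast Nat.lt_two_pow_self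
  rw [pow_add, pow_mul', mul_comm]
  push_cast at h
  gcongr
  norm_num

lemma aseq_div_bseq (n : ℕ) : aseq n / bseq n = quotientFormula n (2 ^ (2 * n + 2)) := by
  have hfact : ((2 * n + 5).factorial : ℚ) = (2 * n + 5) * (2 * n + 4).factorial := by
    rw [Nat.factorial_succ]
    push_cast
    ring
  have hx := one_lt_two_pow_two_mul_add_two n
  have hx₁ : (2 : ℚ) ^ (2 * n + 2) - 1 ≠ 0 := by linarith
  rw [aseq, bseq, quotientFormula, hfact, pow_succ _ (2 * n + 6)]
  field_simp

lemma quotientFormula_succ_sub (n x : ℚ) (hn : 0 ≤ n) (hx : 1 < x) :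
    quotientFormula (n + 1) (4 * x) - quotientFormula n x =
      2 * (48 * x ^ 2 - (90 * n ^ 2 + 405 * n + 330) * x - 33) /
        (5 * (x - 1) * (4 * x - 1) * (2 * n + 5) * (2 * n + 7)) := by
  have hx₁ : x - 1 ≠ 0 := by linarith
  have hx₄ : 4 * x - 1 ≠ 0 := by linarith
  have hn₅ : 2 * n + 5 ≠ 0 := by linarith
  have hn₇ : 2 * (n + 1) + 5 ≠ 0 := by linarith
  rw [quotientFormula, quotientFormula, div_sub_div _ _ (by positivity) (by positivity),
    div_eq_div_iff (by positivity) (by positivity)]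
  ring

lemma succ_sub_numerator_pos (n x : ℚ) (hn : 2 ≤ n) (hxn : 4 * (n + 1) ^ 2 ≤ x) :
    0 < 48 * x ^ 2 - (90 * n ^ 2 + 405 * n + 330) * x - 33 := by
  nlinarith [mul_le_mul_of_nonneg_left hxn (by nlinarith : (0 : ℚ) ≤ x)]

lemma aseq_div_bseq_succ_sub (n : ℕ) :
    aseq (n + 1) / bseq (n + 1) - aseq n / bseq n =
      2 * (48 * (2 ^ (2 * n + 2)) ^ 2 - (90 * n ^ 2 + 405 * n + 330) * 2 ^ (2 * n + 2) - 33) /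
        (5 * (2 ^ (2 * n + 2) - 1) * (4 * 2 ^ (2 * n + 2) - 1) * (2 * n + 5) * (2 * n + 7)) := by
  have hpow : (2 : ℚ) ^ (2 * (n + 1) + 2) = 4 * 2 ^ (2 * n + 2) := by ring
  rw [aseq_div_bseq, aseq_div_bseq, ← quotientFormula_succ_sub _ _ (by positivity)
    (one_lt_two_pow_two_mul_add_two n)]
  push_cast
  rw [hpow]

theorem stmt_12 :
    (∀ n : ℕ, n < 2 → aseq (n + 1) / bseq (n + 1) < aseq n / bseq n) ∧
    (∀ n : ℕ, 3 ≤ n → aseq n / bseq n < aseq (n + 1) / bseq (n + 1)) := by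
  refine ⟨fun n hn => ?_, fun n hn => ?_⟩
  · rw [← sub_neg, aseq_div_bseq_succ_sub]
    interval_cases n <;> norm_num
  · rw [← sub_pos, aseq_div_bseq_succ_sub]
    set x : ℚ := 2 ^ (2 * n + 2)
    have hx : 1 < x := one_lt_two_pow_two_mul_add_two n
    have hnum := succ_sub_numerator_pos n x (by exact_mod_cast (by omega : 2 ≤ n))
      (four_mul_sq_succ_le_two_pow n)
    have : 0 < x - 1 := by linarith
    have : 0 < 4 * x - 1 := by linarith
    positivity
end

section
/- The function t ↦ (t·cosh²(t) - sinh(t)·cosh(t)) / (t·sinh²(t)) is strictly increasing on (0,∞). -/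
/-!
By the quotient rule and `cosh² - sinh² = 1`, the derivative at `t > 0` is
`sinh t * (cosh t * sinh t ^ 2 + t * sinh t - 2 * t ^ 2 * cosh t) / (t * sinh t ^ 2) ^ 2`.
The bracket is positive: the Taylor bound `sinh t ≥ t + t³/6` together with
`tanh t > t - t³/3` (obtained by comparing derivatives from `0`) bounds it below by
`t⁶ cosh t / 36`.
-/

open Real Set

lemma pos_of_hasDerivAt_of_pos {f f' : ℝ → ℝ} (hf : ∀ x, HasDerivAt f (f' x) x) (h₀ : f 0 = 0)
    (hf' : ∀ x, 0 < x → 0 < f' x) {t : ℝ} (ht : 0 < t) : 0 < f t := by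
  have hmono : StrictMonoOn f (Ici 0) :=
    strictMonoOn_of_hasDerivWithinAt_pos (convex_Ici 0)
      (fun x _ => (hf x).continuousAt.continuousWithinAt) (fun x _ => (hf x).hasDerivWithinAt)
      (fun x hx => hf' x (by simpa using hx))
  simpa [h₀] using hmono self_mem_Ici ht.le ht

lemma add_cube_div_six_le_sinh {t : ℝ} (ht : 0 ≤ t) : t + t ^ 3 / 6 ≤ sinh t := by
  have := sum_le_hasSum (Finset.range 2) (fun n _ => by positivity) (hasSum_sinh t)
  norm_num [Finset.sum_range_succ, Nat.factorial] at this
  linarith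

lemma one_sub_sq_div_three_mul_sinh_lt_mul_cosh {t : ℝ} (ht : 0 < t) :
    (1 - t ^ 2 / 3) * sinh t < t * cosh t := by
  have := pos_of_hasDerivAt_of_pos (f := fun x => x * cosh x - (1 - x ^ 2 / 3) * sinh x)
    (f' := fun x => x * (5 / 3 * sinh x + x / 3 * cosh x))
    (fun x => by
      refine (((hasDerivAt_id' x).mul (hasDerivAt_cosh x)).sub
        ((((hasDerivAt_pow 2 x).div_const 3).const_sub 1).mul (hasDerivAt_sinh x))).congr_deriv ?_
      ring)
    (by simp) (fun x hx => by have := sinh_pos_iff.2 hx; positivity) ht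
  simpa using this

lemma sub_cube_div_three_lt_tanh {t : ℝ} (ht : 0 < t) : t - t ^ 3 / 3 < tanh t := by
  rw [tanh_eq_sinh_div_cosh, lt_div_iff₀ (cosh_pos t)]
  have := pos_of_hasDerivAt_of_pos (f := fun x => sinh x - (x - x ^ 3 / 3) * cosh x)
    (f' := fun x => x * (x * cosh x - (1 - x ^ 2 / 3) * sinh x))
    (fun x => by
      refine ((hasDerivAt_sinh x).sub
        (((hasDerivAt_id' x).fun_sub ((hasDerivAt_pow 3 x).div_const 3)).mul (hasDerivAt_cosh x))
       ).congr_deriv ?_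
      ring)
    (by simp) (fun x hx => mul_pos hx (sub_pos.2 (one_sub_sq_div_three_mul_sinh_lt_mul_cosh hx)))
    ht
  simpa using this

lemma two_mul_sq_mul_cosh_lt {t : ℝ} (ht : 0 < t) :
    2 * t ^ 2 * cosh t < cosh t * sinh t ^ 2 + t * sinh t := by
  have hsinh := add_cube_div_six_le_sinh ht.le
  have htanh : t * ((t - t ^ 3 / 3) * cosh t) < t * sinh t := by
    have := sub_cube_div_three_lt_tanh ht
    rw [tanh_eq_sinh_div_cosh, lt_div_iff₀ (cosh_pos t)] at this
    exact mul_lt_mul_of_pos_left this ht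
  have hsq : (t + t ^ 3 / 6) ^ 2 ≤ sinh t ^ 2 := pow_le_pow_left₀ (by positivity) hsinh 2
  -- combining the two bounds leaves exactly `t ^ 6 / 36 * cosh t > 0`
  nlinarith [mul_le_mul_of_nonneg_left hsq (cosh_pos t).le, mul_pos (pow_pos ht 6) (cosh_pos t)]

lemma hasDerivAt_mul_cosh_sq_sub_div {t : ℝ} (ht : 0 < t) :
    HasDerivAt (fun t : ℝ => (t * cosh t ^ 2 - sinh t * cosh t) / (t * sinh t ^ 2))
      (sinh t * (cosh t * sinh t ^ 2 + t * sinh t - 2 * t ^ 2 * cosh t) / (t * sinh t ^ 2) ^ 2) t := by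
  have hs := sinh_pos_iff.2 ht
  refine (((hasDerivAt_id' t).fun_mul ((hasDerivAt_cosh t).fun_pow 2)).fun_sub
    ((hasDerivAt_sinh t).fun_mul (hasDerivAt_cosh t))).fun_div
    ((hasDerivAt_id' t).fun_mul ((hasDerivAt_sinh t).fun_pow 2)) (by positivity) |>.congr_deriv ?_
  congr 1
  linear_combination (t * sinh t ^ 2 - 2 * t ^ 2 * cosh t * sinh t) * cosh_sq_sub_sinh_sq t

theorem stmt_13 :
    StrictMonoOn (fun t : ℝ =>
      (t * Real.cosh t ^ 2 - Real.sinh t * Real.cosh t) / (t * Real.sinh t ^ 2))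
      (Set.Ioi 0) := by
  refine strictMonoOn_of_hasDerivWithinAt_pos (convex_Ioi 0)
    (fun x hx => (hasDerivAt_mul_cosh_sq_sub_div hx).continuousAt.continuousWithinAt)
    (fun x hx => (hasDerivAt_mul_cosh_sq_sub_div (interior_subset hx)).hasDerivWithinAt)
    (fun x hx => ?_)
  rw [interior_Ioi, mem_Ioi] at hx
  have hs := sinh_pos_iff.2 hx
  exact div_pos (mul_pos hs (sub_pos.2 (two_mul_sq_mul_cosh_lt hx))) (by positivity)
end

section
/- The function f(t) = log(sinh(t)/t) / log(cosh(t)) is strictly increasing on (0, log(1+√2)), with limit 1/3 as t → 0⁺ and limit -2·log(log(1+√2))/log 2 as t → log(1+√2)⁻. -/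
/-!
Write the function as `L / M` with `L t = log (sinh t / t)` and `M t = log (cosh t)`, both tending
to `0` as `t → 0⁺`. By the monotone form of l'Hôpital's rule, `L / M` is increasing wherever
`L' / M' = (coth t - 1 / t) coth t` is. The derivative of the latter has the sign of
`cosh t (sinh² t - 2 t²) + t sinh t`, and Taylor bounds for `sinh` and `cosh` on `(0, 1]` turn its
positivity into a polynomial inequality with positive coefficients; note that
`log (1 + √2) = arsinh 1 < 1`.
The limit at `0` comes from `L t = t² / 6 + O(t⁴)` and `M t = t² / 2 + O(t⁴)`; at `arsinh 1` the
function is continuous, with `sinh = 1` and `cosh = √2`.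
-/

open Real Set Filter Topology

/-- By Cauchy's mean value theorem `f x / g x = f' ξ / g' ξ < f' x / g' x` for some `ξ ∈ (a, x)`,
which makes the derivative of `f / g` positive. -/
theorem strictMonoOn_div_of_strictMonoOn_deriv_div {f g f' g' : ℝ → ℝ} {a b : ℝ}
    (hf : ∀ x ∈ Ioo a b, HasDerivAt f (f' x) x) (hg : ∀ x ∈ Ioo a b, HasDerivAt g (g' x) x)
    (hg' : ∀ x ∈ Ioo a b, 0 < g' x)
    (hfa : Tendsto f (𝓝[>] a) (𝓝 0)) (hga : Tendsto g (𝓝[>] a) (𝓝 0))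
    (hmono : StrictMonoOn (fun x => f' x / g' x) (Ioo a b)) :
    StrictMonoOn (fun x => f x / g x) (Ioo a b) := by
  have hsub : ∀ x ∈ Ioo a b, Ioo a x ⊆ Ioo a b := fun x hx => Ioo_subset_Ioo_right hx.2.le
  have hg_pos : ∀ x ∈ Ioo a b, 0 < g x := by
    intro x hx
    obtain ⟨c, hc, hcx⟩ := exists_ratio_hasDerivAt_eq_ratio_slope' g g' hx.1 id (fun _ => 1)
      (fun y hy => hg y (hsub x hx hy)) (fun y _ => hasDerivAt_id y) hga
      (tendsto_id.mono_left nhdsWithin_le_nhds) (hg x hx).continuousAt.continuousWithinAt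
      continuousWithinAt_id
    simp only [id, sub_zero, mul_one] at hcx
    nlinarith [hg' c (hsub x hx hc), hx.1]
  have hratio_lt : ∀ x ∈ Ioo a b, f x / g x < f' x / g' x := by
    intro x hx
    obtain ⟨c, hc, hcx⟩ := exists_ratio_hasDerivAt_eq_ratio_slope' f f' hx.1 g g'
      (fun y hy => hf y (hsub x hx hy)) (fun y hy => hg y (hsub x hx hy)) hfa hga
      (hf x hx).continuousAt.continuousWithinAt (hg x hx).continuousAt.continuousWithinAt
    rw [sub_zero, sub_zero] at hcx
    have hgc := hg' c (hsub x hx hc)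
    have : f x / g x = f' c / g' c := by
      rw [div_eq_div_iff (hg_pos x hx).ne' hgc.ne']; linarith
    exact this ▸ hmono (hsub x hx hc) hx hc.2
  have hderiv : ∀ x ∈ Ioo a b,
      HasDerivAt (fun x => f x / g x) ((f' x * g x - f x * g' x) / g x ^ 2) x :=
    fun x hx => (hf x hx).div (hg x hx) (hg_pos x hx).ne'
  refine strictMonoOn_of_deriv_pos (convex_Ioo a b)
    (fun x hx => (hderiv x hx).continuousAt.continuousWithinAt) fun x hx => ?_
  rw [interior_Ioo] at hx
  rw [(hderiv x hx).deriv]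
  have := hratio_lt x hx
  rw [div_lt_div_iff₀ (hg_pos x hx) (hg' x hx)] at this
  exact div_pos (by linarith) (pow_pos (hg_pos x hx) 2)

-- `1 / 35840 = 9 / (8! * 8)` is the remainder constant of `Real.exp_bound` at order `8`.
theorem abs_sinh_sub_taylor_le {t : ℝ} (ht : |t| ≤ 1) :
    |sinh t - (t + t ^ 3 / 6 + t ^ 5 / 120 + t ^ 7 / 5040)| ≤ |t| ^ 8 / 35840 := by
  have hpos := Real.exp_bound ht (n := 8) (by norm_num)
  have hneg := Real.exp_bound (x := -t) (by rwa [abs_neg]) (n := 8) (by norm_num)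
  rw [abs_neg] at hneg
  simp only [Finset.sum_range_succ, Finset.sum_range_zero, Nat.factorial] at hpos hneg
  rw [sinh_eq, abs_le] at *
  constructor <;> norm_num at hpos hneg ⊢ <;> linarith [hpos.1, hpos.2, hneg.1, hneg.2]

theorem abs_cosh_sub_taylor_le {t : ℝ} (ht : |t| ≤ 1) :
    |cosh t - (1 + t ^ 2 / 2 + t ^ 4 / 24 + t ^ 6 / 720)| ≤ |t| ^ 8 / 35840 := by
  have hpos := Real.exp_bound ht (n := 8) (by norm_num)
  have hneg := Real.exp_bound (x := -t) (by rwa [abs_neg]) (n := 8) (by norm_num)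
  rw [abs_neg] at hneg
  simp only [Finset.sum_range_succ, Finset.sum_range_zero, Nat.factorial] at hpos hneg
  rw [cosh_eq, abs_le] at *
  constructor <;> norm_num at hpos hneg ⊢ <;> linarith [hpos.1, hpos.2, hneg.1, hneg.2]

theorem sinh_bounds {t : ℝ} (h0 : 0 ≤ t) (h1 : t ≤ 1) :
    t + t ^ 3 / 6 + t ^ 5 / 120 ≤ sinh t ∧ sinh t ≤ t + t ^ 3 / 6 + t ^ 5 / 120 + t ^ 7 / 100 := by
  have h := abs_le.1 (abs_sinh_sub_taylor_le (by rwa [abs_of_nonneg h0]))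
  rw [abs_of_nonneg h0] at h
  have h87 : t ^ 8 ≤ t ^ 7 := pow_le_pow_of_le_one h0 h1 (by norm_num)
  constructor <;> nlinarith [pow_nonneg h0 7]

theorem cosh_bounds {t : ℝ} (h0 : 0 ≤ t) (h1 : t ≤ 1) :
    1 + t ^ 2 / 2 + t ^ 4 / 24 ≤ cosh t ∧ cosh t ≤ 1 + t ^ 2 / 2 + t ^ 4 / 24 + t ^ 6 / 700 := by
  have h := abs_le.1 (abs_cosh_sub_taylor_le (by rwa [abs_of_nonneg h0]))
  rw [abs_of_nonneg h0] at h
  have h86 : t ^ 8 ≤ t ^ 6 := pow_le_pow_of_le_one h0 h1 (by norm_num)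
  constructor <;> nlinarith [pow_nonneg h0 6]

theorem cosh_mul_sinh_sq_sub_add_mul_sinh_pos {t : ℝ} (h0 : 0 < t) (h1 : t ≤ 1) :
    0 < cosh t * (sinh t ^ 2 - 2 * t ^ 2) + t * sinh t := by
  obtain ⟨hS, -⟩ := sinh_bounds h0.le h1
  obtain ⟨-, hC⟩ := cosh_bounds h0.le h1
  set S := t + t ^ 3 / 6 + t ^ 5 / 120
  set C := 1 + t ^ 2 / 2 + t ^ 4 / 24 + t ^ 6 / 700
  have hS0 : 0 < S := by positivity
  have hpoly : C * (2 * t ^ 2 - S ^ 2) < t * S := by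
    have hexpand : t * S - C * (2 * t ^ 2 - S ^ 2) = t ^ 6 * (8 / 45 + 59 / 1575 * t ^ 2
        + 229 / 60480 * t ^ 4 + 647 / 3024000 * t ^ 6 + 83 / 12096000 * t ^ 8
        + 1 / 10080000 * t ^ 10) := by ring
    have : 0 < t * S - C * (2 * t ^ 2 - S ^ 2) := hexpand ▸ by positivity
    linarith
  rcases le_or_gt (2 * t ^ 2) (sinh t ^ 2) with h | h
  · nlinarith [mul_nonneg (cosh_pos t).le (sub_nonneg.2 h), sinh_pos_iff.2 h0]
  · have hC0 : 0 ≤ C := by positivity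
    have hSS : S ^ 2 ≤ sinh t ^ 2 := pow_le_pow_left₀ hS0.le hS 2
    have : cosh t * (2 * t ^ 2 - sinh t ^ 2) < t * sinh t := calc
      _ ≤ C * (2 * t ^ 2 - sinh t ^ 2) := by gcongr
      _ ≤ C * (2 * t ^ 2 - S ^ 2) := by gcongr
      _ < t * S := hpoly
      _ ≤ t * sinh t := by gcongr
    linarith

theorem hasDerivAt_log_sinh_div_self {t : ℝ} (ht : t ≠ 0) :
    HasDerivAt (fun t => log (sinh t / t)) (cosh t / sinh t - 1 / t) t := by
  have hs : sinh t ≠ 0 := sinh_ne_zero.2 ht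
  refine (((hasDerivAt_sinh t).div (hasDerivAt_id' t) ht).log (div_ne_zero hs ht)).congr_deriv ?_
  simp only [Pi.div_apply]
  field_simp

theorem hasDerivAt_log_cosh (t : ℝ) :
    HasDerivAt (fun t => log (cosh t)) (sinh t / cosh t) t :=
  (hasDerivAt_cosh t).log (cosh_pos t).ne'

theorem strictMonoOn_coth_sub_inv_mul_coth :
    StrictMonoOn (fun t => (cosh t / sinh t - 1 / t) * (cosh t / sinh t)) (Ioc 0 1) := by
  have hderiv : ∀ t, 0 < t → HasDerivAt (fun t => (cosh t / sinh t - 1 / t) * (cosh t / sinh t))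
      ((cosh t * (sinh t ^ 2 - 2 * t ^ 2) + t * sinh t) / (t ^ 2 * sinh t ^ 3)) t := by
    intro t ht
    have hs : sinh t ≠ 0 := (sinh_pos_iff.2 ht).ne'
    have hcoth := (hasDerivAt_cosh t).div (hasDerivAt_sinh t) hs
    have hinv := (hasDerivAt_const t (1 : ℝ)).div (hasDerivAt_id' t) ht.ne'
    refine ((hcoth.sub hinv).mul hcoth).congr_deriv ?_
    simp only [Pi.div_apply, Pi.sub_apply]
    field_simp
    rw [cosh_sq']
    ring
  refine strictMonoOn_of_deriv_pos (convex_Ioc 0 1)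
    (fun t ht => (hderiv t ht.1).continuousAt.continuousWithinAt) fun t ht => ?_
  rw [interior_Ioc] at ht
  rw [(hderiv t ht.1).deriv]
  exact div_pos (cosh_mul_sinh_sq_sub_add_mul_sinh_pos ht.1 ht.2.le)
    (mul_pos (pow_pos ht.1 2) (pow_pos (sinh_pos_iff.2 ht.1) 3))

theorem tendsto_log_sinh_div_self_nhdsGT_zero :
    Tendsto (fun t => log (sinh t / t)) (𝓝[>] 0) (𝓝 0) := by
  have hslope : Tendsto (fun t => sinh t / t) (𝓝[≠] 0) (𝓝 1) := by
    have := hasDerivAt_iff_tendsto_slope.1 (hasDerivAt_sinh 0)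
    simpa [slope_fun_def_field, cosh_zero] using this
  have hlog := (continuousAt_log one_ne_zero).tendsto.comp hslope
  rw [log_one] at hlog
  exact hlog.mono_left (nhdsWithin_mono 0 fun _ hx => ne_of_gt hx)

theorem tendsto_log_cosh_nhdsGT_zero : Tendsto (fun t => log (cosh t)) (𝓝[>] 0) (𝓝 0) := by
  simpa using (hasDerivAt_log_cosh 0).continuousAt.continuousWithinAt.tendsto (s := Ioi 0)

theorem strictMonoOn_log_sinh_div_self_div_log_cosh :
    StrictMonoOn (fun t => log (sinh t / t) / log (cosh t)) (Ioo 0 1) := by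
  refine strictMonoOn_div_of_strictMonoOn_deriv_div
    (fun t ht => hasDerivAt_log_sinh_div_self ht.1.ne') (fun t _ => hasDerivAt_log_cosh t)
    (fun t ht => div_pos (sinh_pos_iff.2 ht.1) (cosh_pos t))
    tendsto_log_sinh_div_self_nhdsGT_zero tendsto_log_cosh_nhdsGT_zero ?_
  simp only [div_div_eq_mul_div, mul_div_assoc]
  exact strictMonoOn_coth_sub_inv_mul_coth.mono Ioo_subset_Ioc_self

theorem abs_log_one_add_sub_self_le {u : ℝ} (hu : 0 ≤ u) : |log (1 + u) - u| ≤ u ^ 2 := by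
  have hu1 : 0 < 1 + u := by linarith
  have hlo := one_sub_inv_le_log_of_pos hu1
  have hup := log_le_sub_one_of_pos hu1
  have hinv : 1 - (1 + u)⁻¹ = u / (1 + u) := by field_simp; ring
  have : u - u ^ 2 ≤ u / (1 + u) := by
    rw [le_div_iff₀ hu1]; nlinarith [pow_nonneg hu 3]
  rw [abs_le]; constructor <;> linarith

theorem abs_log_sinh_div_self_sub_le {t : ℝ} (h0 : 0 < t) (h1 : t ≤ 1 / 2) :
    |log (sinh t / t) - t ^ 2 / 6| ≤ t ^ 4 := by
  obtain ⟨hlo, hup⟩ := sinh_bounds h0.le (by linarith)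
  set u := sinh t / t - 1
  have hu_lo : t ^ 2 / 6 ≤ u := by
    rw [le_sub_iff_add_le, le_div_iff₀ h0]; nlinarith [pow_pos h0 5]
  have hu_up : u ≤ t ^ 2 / 6 + t ^ 4 / 2 := by
    rw [sub_le_iff_le_add, div_le_iff₀ h0]
    nlinarith [pow_pos h0 5, pow_le_pow_of_le_one h0.le (by linarith : t ≤ 1) (by norm_num : 5 ≤ 7)]
  have hlog := abs_log_one_add_sub_self_le (u := u) (by nlinarith)
  rw [show 1 + u = sinh t / t by ring] at hlog
  have ht2 : t ^ 2 ≤ 1 / 4 := by nlinarith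
  have hu2 : u ^ 2 ≤ (t ^ 2 / 2) ^ 2 := pow_le_pow_left₀ (le_trans (by positivity) hu_lo)
    (by nlinarith [mul_le_mul_of_nonneg_left ht2 (sq_nonneg t)]) 2
  rw [abs_le] at hlog ⊢; constructor <;> nlinarith

theorem abs_log_cosh_sub_le {t : ℝ} (h0 : 0 ≤ t) (h1 : t ≤ 1) :
    |log (cosh t) - t ^ 2 / 2| ≤ 2 * t ^ 4 := by
  obtain ⟨hlo, hup⟩ := cosh_bounds h0 h1
  set v := cosh t - 1
  have hv_lo : t ^ 2 / 2 ≤ v := by nlinarith [pow_nonneg h0 4]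
  have hv_up : v ≤ t ^ 2 / 2 + t ^ 4 / 2 := by
    nlinarith [pow_nonneg h0 4, pow_le_pow_of_le_one h0 h1 (by norm_num : 4 ≤ 6)]
  have hlog := abs_log_one_add_sub_self_le (u := v) (by nlinarith [pow_nonneg h0 2])
  rw [show 1 + v = cosh t by ring] at hlog
  have hv2 : v ^ 2 ≤ t ^ 4 := by
    nlinarith [pow_nonneg h0 2, pow_le_pow_of_le_one h0 h1 (by norm_num : 2 ≤ 4)]
  rw [abs_le] at hlog ⊢; constructor <;> nlinarith

theorem abs_log_sinh_div_self_div_log_cosh_sub_le {t : ℝ} (h0 : 0 < t) (h1 : t ≤ 1 / 4) :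
    |log (sinh t / t) / log (cosh t) - 1 / 3| ≤ 7 * t ^ 2 := by
  have hL := abs_le.1 (abs_log_sinh_div_self_sub_le h0 (by linarith))
  have hM := abs_le.1 (abs_log_cosh_sub_le h0.le (by linarith))
  have ht2 : t ^ 2 ≤ 1 / 16 := by nlinarith
  have hM_lo : t ^ 2 / 4 ≤ log (cosh t) := by nlinarith [pow_pos h0 2]
  have hM0 : 0 < log (cosh t) := lt_of_lt_of_le (by positivity) hM_lo
  rw [div_sub' hM0.ne', abs_div, abs_of_pos hM0, div_le_iff₀ hM0, abs_le]
  constructor <;> nlinarith [pow_pos h0 2, pow_pos h0 4]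

theorem tendsto_log_sinh_div_self_div_log_cosh_nhdsGT_zero :
    Tendsto (fun t => log (sinh t / t) / log (cosh t)) (𝓝[>] 0) (𝓝 (1 / 3)) := by
  rw [tendsto_iff_norm_sub_tendsto_zero]
  refine squeeze_zero' (Eventually.of_forall fun _ => norm_nonneg _) ?_
    (tendsto_nhdsWithin_of_tendsto_nhds
      (by simpa using ((continuous_pow 2).const_mul (7 : ℝ)).tendsto 0))
  filter_upwards [Ioo_mem_nhdsGT (by norm_num : (0 : ℝ) < 1 / 4)] with t ht
  exact abs_log_sinh_div_self_div_log_cosh_sub_le ht.1 ht.2.le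

theorem log_one_add_sqrt_two : log (1 + √2) = arsinh 1 := by
  norm_num [arsinh]

theorem log_sinh_div_self_div_log_cosh_arsinh_one :
    log (sinh (arsinh 1) / arsinh 1) / log (cosh (arsinh 1)) = -2 * log (arsinh 1) / log 2 := by
  rw [sinh_arsinh, cosh_arsinh, one_div, log_inv, one_pow, one_add_one_eq_two,
    log_sqrt zero_le_two]
  ring

theorem arsinh_one_le_one : arsinh 1 ≤ 1 :=
  (arsinh_le_arsinh.2 (self_le_sinh_iff.2 zero_le_one)).trans_eq (arsinh_sinh 1)

theorem continuousAt_log_sinh_div_self_div_log_cosh {t : ℝ} (ht : t ≠ 0) :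
    ContinuousAt (fun t => log (sinh t / t) / log (cosh t)) t :=
  (hasDerivAt_log_sinh_div_self ht).continuousAt.div (hasDerivAt_log_cosh t).continuousAt
    (log_pos (one_lt_cosh.2 ht)).ne'

open Real in
theorem stmt_15 :
    StrictMonoOn (fun t : ℝ => Real.log (Real.sinh t / t) / Real.log (Real.cosh t))
      (Set.Ioo 0 (Real.log (1 + Real.sqrt 2))) ∧
    Filter.Tendsto (fun t : ℝ => Real.log (Real.sinh t / t) / Real.log (Real.cosh t))
      (nhdsWithin 0 (Set.Ioi 0)) (nhds (1 / 3)) ∧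
    Filter.Tendsto (fun t : ℝ => Real.log (Real.sinh t / t) / Real.log (Real.cosh t))
      (nhdsWithin (Real.log (1 + Real.sqrt 2)) (Set.Iio (Real.log (1 + Real.sqrt 2))))
      (nhds (-2 * Real.log (Real.log (1 + Real.sqrt 2)) / Real.log 2)) := by
  rw [log_one_add_sqrt_two, ← log_sinh_div_self_div_log_cosh_arsinh_one]
  refine ⟨strictMonoOn_log_sinh_div_self_div_log_cosh.mono
      (Ioo_subset_Ioo_right arsinh_one_le_one),
    tendsto_log_sinh_div_self_div_log_cosh_nhdsGT_zero, ?_⟩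
  exact (continuousAt_log_sinh_div_self_div_log_cosh
    (arsinh_pos_iff.2 one_pos).ne').continuousWithinAt.tendsto
end
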